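/- Define ι : B_{2n} → B_{2n} by ι(β) = s_{2i-1}·β, where i ∈ [n] is the smallest index such that 2i-1 and 2i have opposite signs or are not in adjacent positions in the window of β, and ι(β) = β if no such i exists. Then ι is an involution, and for every β with ι(β) ≠ β one has ℓ_B(ι(β)) ≢ ℓ_B(β) (mod 2), Des(ι(β)) = Des(β), N_1(ι(β)) = N_1(β), and fmaj(ι(β)) = fmaj(β). -/
import Mathlib


open Finset Polynomial

/-- The hyperoctahedral group `B n`, modeled as pairs (permutation, sign vector):
the signed permutation with window `β(i) = ±(σ(i)+1)`. -/
abbrev Bgrp (n : ℕ) := Equiv.Perm (Fin n) × (Fin n → Bool)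

/-- The window entry `β(i)` (a nonzero integer). -/
def wdw {n : ℕ} (β : Bgrp n) (i : Fin n) : ℤ :=
  (if β.2 i then -1 else 1) * ((β.1 i : ℤ) + 1)

/-- Window entry at a `ℕ` position (0-based), `0` out of range. -/
def wdwN {n : ℕ} (β : Bgrp n) (i : ℕ) : ℤ :=
  if h : i < n then wdw β ⟨i, h⟩ else 0

/-- Number of inversions of the window. -/
def invB {n : ℕ} (β : Bgrp n) : ℕ :=
  ((univ : Finset (Fin n × Fin n)).filter
    (fun p => p.1 < p.2 ∧ wdw β p.2 < wdw β p.1)).card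

/-- The set of positions with negative entries. -/
def NegB {n : ℕ} (β : Bgrp n) : Finset (Fin n) :=
  univ.filter (fun i => wdw β i < 0)

def N1 {n : ℕ} (β : Bgrp n) : ℕ := (NegB β).card

def N2 {n : ℕ} (β : Bgrp n) : ℕ :=
  ((univ : Finset (Fin n × Fin n)).filter
    (fun p => p.1 < p.2 ∧ wdw β p.1 + wdw β p.2 < 0)).card

/-- The order `-1 ≺ -2 ≺ ⋯ ≺ -n ≺ 1 ≺ 2 ≺ ⋯ ≺ n` on nonzero integers. -/
def precLt (a b : ℤ) : Prop :=
  (a < 0 ∧ b < 0 ∧ b < a) ∨ (a < 0 ∧ 0 < b) ∨ (0 < a ∧ 0 < b ∧ a < b)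

instance (a b : ℤ) : Decidable (precLt a b) := by unfold precLt; infer_instance

/-- Descent set of the window, with respect to `≺` (0-based positions). -/
def DesB {n : ℕ} (β : Bgrp n) : Finset ℕ :=
  (range (n-1)).filter (fun i => precLt (wdwN β (i+1)) (wdwN β i))

/-- Major index: sum of the (1-based) descent positions. -/
def majB {n : ℕ} (β : Bgrp n) : ℕ := ∑ i ∈ DesB β, (i+1)

/-- Flag-major index. -/
def fmaj {n : ℕ} (β : Bgrp n) : ℕ := 2 * majB β + N1 β

/-- Group multiplication (composition of signed permutations). -/
def bmul {n : ℕ} (β γ : Bgrp n) : Bgrp n :=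
  (β.1 * γ.1, fun i => xor (γ.2 i) (β.2 (γ.1 i)))

/-- The identity signed permutation. -/
def bone (n : ℕ) : Bgrp n := (1, fun _ => false)

/-- The Coxeter generators `s_0, s_1, …, s_{n-1}` of `B n`. -/
def BGens (n : ℕ) : Set (Bgrp n) :=
  { b | (∃ h : 0 < n, b = ((1 : Equiv.Perm (Fin n)), fun j => decide (j = (⟨0, h⟩ : Fin n)))) ∨
        (∃ (i : ℕ) (h : i + 1 < n),
          b = (Equiv.swap ⟨i, Nat.lt_of_succ_lt h⟩ ⟨i+1, h⟩, fun _ => false)) }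

/-- Minimal length of an expression of `β` as a product of the generators of `B n`. -/
noncomputable def lenB {n : ℕ} (β : Bgrp n) : ℕ :=
  sInf {k | ∃ l : List (Bgrp n), l.length = k ∧ (∀ g ∈ l, g ∈ BGens n) ∧
    l.foldr bmul (bone n) = β}

/-- The Coxeter generators `s_0^D, s_1, …, s_{n-1}` of `D n`. -/
def DGens (n : ℕ) : Set (Bgrp n) :=
  { b | (∃ h : 1 < n,
          b = (Equiv.swap ⟨0, Nat.lt_of_succ_lt h⟩ ⟨1, h⟩, fun (j : Fin n) => decide ((j : ℕ) < 2))) ∨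
        (∃ (i : ℕ) (h : i + 1 < n),
          b = (Equiv.swap ⟨i, Nat.lt_of_succ_lt h⟩ ⟨i+1, h⟩, fun _ => false)) }

/-- Minimal length of an expression as a product of the generators of `D n`. -/
noncomputable def lenD {n : ℕ} (β : Bgrp n) : ℕ :=
  sInf {k | ∃ l : List (Bgrp n), l.length = k ∧ (∀ g ∈ l, g ∈ DGens n) ∧
    l.foldr bmul (bone n) = β}

/-- The even-signed permutation group `D n` as a finset of `B n`. -/
def Dgrp (n : ℕ) : Finset (Bgrp n) := univ.filter (fun γ => Even (N1 γ))

/-- `Δ_n = {γ ∈ B_n : γ(n) > 0}`. -/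
def DeltaSet (n : ℕ) : Finset (Bgrp n) := univ.filter (fun γ => 0 < wdwN γ (n-1))

/-- `|γ|_n`: replace the last window entry by its absolute value. -/
def absLast {n : ℕ} (γ : Bgrp n) : Bgrp n :=
  (γ.1, fun i => if (i : ℕ) = n - 1 then false else γ.2 i)

/-- The `D`-major index. -/
def Dmaj {n : ℕ} (γ : Bgrp n) : ℕ := fmaj (absLast γ)

/-- `-β`: negate all window entries. -/
def negB {n : ℕ} (β : Bgrp n) : Bgrp n := (β.1, fun i => !β.2 i)

/-- Number of inversions of a permutation of `Fin n`. -/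
def invS {n : ℕ} (σ : Equiv.Perm (Fin n)) : ℕ :=
  ((univ : Finset (Fin n × Fin n)).filter
    (fun p => p.1 < p.2 ∧ σ p.2 < σ p.1)).card

/-- Major index of a permutation of `Fin n` (usual order). -/
def majS {n : ℕ} (σ : Equiv.Perm (Fin n)) : ℕ :=
  ∑ i ∈ (range (n-1)).filter
      (fun i => ∀ h : i + 1 < n, σ ⟨i+1, h⟩ < σ ⟨i, Nat.lt_of_succ_lt h⟩), (i+1)

/-- The `q`-analogue `[m]_q = 1 + q + ⋯ + q^{m-1}`, evaluated at a polynomial `q`. -/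
noncomputable def qpoly (m : ℕ) (q : Polynomial ℤ) : Polynomial ℤ := ∑ k ∈ range m, q ^ k

/-- Position (0-based) of the value `v+1` in the window of `β`. -/
def posOf {m : ℕ} (β : Bgrp m) (v : ℕ) : ℕ :=
  if h : v < m then (β.1.symm ⟨v, h⟩ : ℕ) else 0

/-- Sign of the value `v+1` in the window of `β`. -/
def sgnOf {m : ℕ} (β : Bgrp m) (v : ℕ) : Bool :=
  if h : v < m then β.2 (β.1.symm ⟨v, h⟩) else false

/-- The pair of values `2i+1, 2i+2` (1-based: `2(i+1)-1, 2(i+1)`) has opposite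
signs or occupies non-adjacent positions in the window of `β`. -/
def pairBad {m : ℕ} (β : Bgrp m) (i : ℕ) : Prop :=
  sgnOf β (2*i) ≠ sgnOf β (2*i+1) ∨
    (posOf β (2*i) + 1 ≠ posOf β (2*i+1) ∧ posOf β (2*i+1) + 1 ≠ posOf β (2*i))

instance {m : ℕ} (β : Bgrp m) (i : ℕ) : Decidable (pairBad β i) := by
  unfold pairBad; infer_instance

open scoped Classical in
/-- The map `ι : B_{2n} → B_{2n}`: left multiplication by the transposition of the
values `2i-1, 2i` for the smallest bad pair `i`, identity if no bad pair exists. -/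
noncomputable def iota (n : ℕ) (β : Bgrp (2*n)) : Bgrp (2*n) :=
  if h : ∃ i, i < n ∧ pairBad β i then
    have hi : Nat.find h < n := (Nat.find_spec h).1
    bmul (Equiv.swap ⟨2 * Nat.find h, by omega⟩ ⟨2 * Nat.find h + 1, by omega⟩,
      fun _ => false) β
  else β

section WordLemmas
variable {m : ℕ}

lemma bmul_assoc (a b c : Bgrp m) : bmul (bmul a b) c = bmul a (bmul b c) := by
  unfold bmul
  refine Prod.ext (mul_assoc _ _ _) (funext fun i => ?_)
  simp [Equiv.Perm.mul_apply, Bool.xor_assoc]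

lemma bone_bmul (a : Bgrp m) : bmul (bone m) a = a := by
  unfold bmul bone
  exact Prod.ext (one_mul _) (funext fun i => by simp)

lemma bmul_bone (a : Bgrp m) : bmul a (bone m) = a := by
  unfold bmul bone
  exact Prod.ext (mul_one _) (funext fun i => by simp)

def hasWord (β : Bgrp m) : Prop :=
  ∃ l : List (Bgrp m), (∀ g ∈ l, g ∈ BGens m) ∧ l.foldr bmul (bone m) = β

lemma foldr_bmul_eq (l : List (Bgrp m)) (x : Bgrp m) :
    l.foldr bmul x = bmul (l.foldr bmul (bone m)) x := by
  induction l with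
  | nil => simp [bone_bmul]
  | cons a l ih => simp only [List.foldr_cons, ih, bmul_assoc]

lemma hasWord_bmul {β γ : Bgrp m} (hβ : hasWord β) (hγ : hasWord γ) :
    hasWord (bmul β γ) := by
  obtain ⟨l1, h1, e1⟩ := hβ; obtain ⟨l2, h2, e2⟩ := hγ
  refine ⟨l1 ++ l2, ?_, ?_⟩
  · intro g hg; rcases List.mem_append.1 hg with h | h
    exacts [h1 g h, h2 g h]
  · rw [List.foldr_append, foldr_bmul_eq, e1, e2]

lemma map_perm_foldr (l : List (Equiv.Perm (Fin m))) :
    (l.map (fun σ => ((σ, fun _ => false) : Bgrp m))).foldr bmul (bone m)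
      = (l.prod, fun _ => false) := by
  induction l with
  | nil => simp [bone]
  | cons a l ih =>
    simp only [List.map_cons, List.foldr_cons, ih, List.prod_cons]
    unfold bmul
    exact Prod.ext rfl (funext fun i => by simp)

lemma hasWord_perm (σ : Equiv.Perm (Fin m)) :
    hasWord ((σ, fun _ => false) : Bgrp m) := by
  match m, σ with
  | 0, σ =>
    refine ⟨[], by simp, ?_⟩
    unfold bone
    exact Prod.ext (Equiv.ext fun i => i.elim0) rfl
  | (m+1), σ =>
    have hσ : σ ∈ Submonoid.closure
        (Set.range fun i : Fin m ↦ Equiv.swap i.castSucc i.succ) := by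
      rw [Equiv.Perm.mclosure_swap_castSucc_succ]; trivial
    obtain ⟨l, hl, hprod⟩ := Submonoid.exists_list_of_mem_closure hσ
    refine ⟨l.map (fun τ => (τ, fun _ => false)), ?_, by rw [map_perm_foldr, hprod]⟩
    intro g hg
    obtain ⟨τ, hτ, rfl⟩ := List.mem_map.1 hg
    obtain ⟨i, rfl⟩ := hl τ hτ
    have e1 : (i.castSucc : Fin (m+1)) = ⟨(i : ℕ), Nat.lt_succ_of_lt i.isLt⟩ :=
      Fin.ext (by simp)
    have e2 : (i.succ : Fin (m+1)) = ⟨(i : ℕ)+1, Nat.succ_lt_succ i.isLt⟩ :=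
      Fin.ext (by simp)
    simp only [BGens, Set.mem_setOf_eq]
    refine Or.inr ⟨(i : ℕ), Nat.succ_lt_succ i.isLt, ?_⟩
    rw [e1, e2]

lemma bmul_one_sign (χ χ' : Fin m → Bool) :
    bmul ((1 : Equiv.Perm (Fin m)), χ) (1, χ') = (1, fun i => xor (χ' i) (χ i)) := by
  unfold bmul
  exact Prod.ext (one_mul _) (funext fun i => by simp)

lemma hasWord_e (hm : 0 < m) (j : Fin m) :
    hasWord ((1 : Equiv.Perm (Fin m)), fun i => decide (i = j)) := by
  have hs0 : (((1 : Equiv.Perm (Fin m)), fun i => decide (i = (⟨0, hm⟩ : Fin m))) : Bgrp m)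
      ∈ BGens m := Or.inl ⟨hm, rfl⟩
  have key : bmul ((Equiv.swap (⟨0, hm⟩ : Fin m) j), fun _ => false)
      (bmul (1, fun i => decide (i = (⟨0, hm⟩ : Fin m)))
        ((Equiv.swap (⟨0, hm⟩ : Fin m) j)⁻¹, fun _ => false))
      = (1, fun i => decide (i = j)) := by
    unfold bmul
    refine Prod.ext ?_ (funext fun i => ?_)
    · simp
    · simp only [Bool.xor_false, Bool.false_xor]
      rw [decide_eq_decide]
      rw [show ((Equiv.swap (⟨0, hm⟩ : Fin m) j)⁻¹ : Equiv.Perm (Fin m))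
          = (Equiv.swap (⟨0, hm⟩ : Fin m) j).symm from rfl]
      rw [Equiv.symm_apply_eq, Equiv.swap_apply_left]
  have w := hasWord_bmul (hasWord_perm (Equiv.swap (⟨0, hm⟩ : Fin m) j))
    (hasWord_bmul ⟨[_], by simpa using hs0, bmul_bone _⟩
      (hasWord_perm (Equiv.swap (⟨0, hm⟩ : Fin m) j)⁻¹))
  rwa [key] at w

lemma hasWord_sign : ∀ (N : ℕ) (χ : Fin m → Bool),
    (univ.filter fun i => χ i = true).card ≤ N →
    hasWord ((1 : Equiv.Perm (Fin m)), χ)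
  | 0, χ, h => by
    have he : χ = fun _ => false := by
      funext i
      cases hc : χ i
      · rfl
      · exfalso
        have : i ∈ univ.filter fun i => χ i = true := by simp [hc]
        have := Finset.card_pos.2 ⟨i, this⟩
        omega
    rw [he]
    exact ⟨[], by simp, rfl⟩
  | (N+1), χ, h => by
    by_cases hne : (univ.filter fun i => χ i = true).Nonempty
    · obtain ⟨j, hj⟩ := hne
      have hχj : χ j = true := (Finset.mem_filter.1 hj).2
      have hm : 0 < m := j.pos
      have hsub : (univ.filter fun i => (Function.update χ j false) i = true)
          = (univ.filter fun i => χ i = true).erase j := by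
        ext i
        simp only [Finset.mem_filter, Finset.mem_erase, Finset.mem_univ, true_and,
          Function.update_apply]
        by_cases hij : i = j <;> simp [hij]
      have hcard' : (univ.filter fun i => (Function.update χ j false) i = true).card ≤ N := by
        rw [hsub]
        have := Finset.card_erase_of_mem hj
        omega
      have hw' := hasWord_sign N (Function.update χ j false) hcard'
      have key : bmul (1, fun i => decide (i = j)) (1, Function.update χ j false) = (1, χ) := by
        rw [bmul_one_sign]
        refine Prod.ext rfl (funext fun i => ?_)
        by_cases hij : i = j
        · subst hij; simp [Function.update_apply, hχj]
        · simp [Function.update_apply, hij]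
      have := hasWord_bmul (hasWord_e hm j) hw'
      rwa [key] at this
    · exact hasWord_sign N χ
        (by rw [Finset.not_nonempty_iff_eq_empty.1 hne]; simp)

lemma hasWord_all (β : Bgrp m) : hasWord β := by
  have key : bmul ((β.1, fun _ => false) : Bgrp m) (1, β.2) = β := by
    unfold bmul
    exact Prod.ext (mul_one _) (funext fun i => by simp)
  have := hasWord_bmul (hasWord_perm β.1) (hasWord_sign _ β.2 le_rfl)
  rwa [key] at this

def parB (β : Bgrp m) : ZMod 2 :=
  (if Equiv.Perm.sign β.1 = 1 then 0 else 1)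
    + ((univ.filter fun i => β.2 i = true).card : ZMod 2)

lemma parB_bmul (β γ : Bgrp m) : parB (bmul β γ) = parB β + parB γ := by
  unfold parB bmul
  have hsgn : (if Equiv.Perm.sign (β.1 * γ.1) = 1 then (0:ZMod 2) else 1)
      = (if Equiv.Perm.sign β.1 = 1 then 0 else 1)
        + (if Equiv.Perm.sign γ.1 = 1 then 0 else 1) := by
    rw [map_mul]
    rcases Int.units_eq_one_or (Equiv.Perm.sign β.1) with h | h <;>
      rcases Int.units_eq_one_or (Equiv.Perm.sign γ.1) with h' | h' <;>
        rw [h, h'] <;> norm_num <;> decide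
  have hcard : (((univ.filter fun i => (xor (γ.2 i) (β.2 (γ.1 i))) = true).card : ℕ) : ZMod 2)
      = ((univ.filter fun i => β.2 i = true).card : ZMod 2)
        + ((univ.filter fun i => γ.2 i = true).card : ZMod 2) := by
    classical
    rw [Finset.card_filter, Finset.card_filter, Finset.card_filter,
      Nat.cast_sum, Nat.cast_sum, Nat.cast_sum]
    simp only [Nat.cast_ite, Nat.cast_one, Nat.cast_zero]
    rw [← Equiv.sum_comp γ.1 (fun i => if β.2 i = true then (1:ZMod 2) else 0),
      ← Finset.sum_add_distrib]
    refine Finset.sum_congr rfl fun i _ => ?_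
    cases hb : β.2 (γ.1 i) <;> cases hc : γ.2 i <;> simp [hb, hc] <;> decide
  rw [hsgn, hcard]
  ring

lemma parB_bone : parB (bone m) = 0 := by
  unfold parB bone
  simp

lemma parB_gen {g : Bgrp m} (hg : g ∈ BGens m) : parB g = 1 := by
  rcases hg with ⟨h0, rfl⟩ | ⟨i, hi, rfl⟩
  · unfold parB
    simp only [map_one, if_pos rfl, zero_add]
    have : (univ.filter fun j : Fin m => (decide (j = (⟨0, h0⟩ : Fin m))) = true)
        = {(⟨0, h0⟩ : Fin m)} := by
      ext x; simp
    rw [this]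
    simp
  · unfold parB
    have hne : (⟨i, Nat.lt_of_succ_lt hi⟩ : Fin m) ≠ ⟨i+1, hi⟩ := by
      intro hEq
      have := congrArg Fin.val hEq
      simp at this
    rw [Equiv.Perm.sign_swap hne]
    simp

lemma parB_foldr (l : List (Bgrp m)) (hl : ∀ g ∈ l, g ∈ BGens m) :
    parB (l.foldr bmul (bone m)) = (l.length : ZMod 2) := by
  induction l with
  | nil => simpa using parB_bone
  | cons a l ih =>
    simp only [List.foldr_cons, List.length_cons]
    rw [parB_bmul, parB_gen (hl a (by simp)), ih (fun g hg => hl g (by simp [hg]))]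
    push_cast
    ring

lemma lenB_cast (β : Bgrp m) : ((lenB β : ℕ) : ZMod 2) = parB β := by
  have hne : {k | ∃ l : List (Bgrp m), l.length = k ∧ (∀ g ∈ l, g ∈ BGens m) ∧
      l.foldr bmul (bone m) = β}.Nonempty := by
    obtain ⟨l, h1, h2⟩ := hasWord_all β
    exact ⟨l.length, l, rfl, h1, h2⟩
  obtain ⟨l, hlen, hg, hfold⟩ := Nat.sInf_mem hne
  unfold lenB
  rw [← hlen, ← hfold, parB_foldr l hg]

lemma lenB_mod_ne {g β : Bgrp m} (hg : g ∈ BGens m) :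
    lenB (bmul g β) % 2 ≠ lenB β % 2 := by
  intro hEq
  have h1 : ((lenB (bmul g β) : ℕ) : ZMod 2) = ((lenB β : ℕ) : ZMod 2) := by
    rw [← ZMod.natCast_mod (lenB (bmul g β)) 2, ← ZMod.natCast_mod (lenB β) 2, hEq]
  rw [lenB_cast, lenB_cast, parB_bmul, parB_gen hg] at h1
  have h2 : (1 : ZMod 2) + parB β = 0 + parB β := by rw [h1, zero_add]
  exact absurd (add_right_cancel h2) (by decide)

end WordLemmas
section IotaLemmas
variable {n k : ℕ}

def gk (n k : ℕ) (hk : k < n) : Bgrp (2*n) :=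
  (Equiv.swap ⟨2*k, by omega⟩ ⟨2*k+1, by omega⟩, fun _ => false)

lemma gk_mem (hk : k < n) : gk n k hk ∈ BGens (2*n) := by
  have h2 : 2*k+1 < 2*n := by omega
  simp only [BGens, Set.mem_setOf_eq]
  exact Or.inr ⟨2*k, h2, rfl⟩

lemma gk_snd (hk : k < n) (β : Bgrp (2*n)) (p : Fin (2*n)) :
    (bmul (gk n k hk) β).2 p = β.2 p := by
  simp [bmul, gk]

lemma gk_fst (hk : k < n) (β : Bgrp (2*n)) (p : Fin (2*n)) :
    (bmul (gk n k hk) β).1 p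
      = Equiv.swap (⟨2*k, by omega⟩ : Fin (2*n)) ⟨2*k+1, by omega⟩ (β.1 p) := rfl

lemma gk_symm (hk : k < n) (β : Bgrp (2*n)) (v : Fin (2*n)) :
    (bmul (gk n k hk) β).1.symm v
      = β.1.symm (Equiv.swap (⟨2*k, by omega⟩ : Fin (2*n)) ⟨2*k+1, by omega⟩ v) := by
  rw [Equiv.symm_apply_eq, gk_fst, Equiv.apply_symm_apply, Equiv.swap_apply_self]

lemma swap_val (hk : k < n) (x : Fin (2*n)) :
    ((Equiv.swap (⟨2*k, by omega⟩ : Fin (2*n)) ⟨2*k+1, by omega⟩ x : Fin (2*n)) : ℕ)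
      = if (x:ℕ) = 2*k then 2*k+1 else if (x:ℕ) = 2*k+1 then 2*k else (x:ℕ) := by
  by_cases h1 : (x:ℕ) = 2*k
  · rw [if_pos h1, show x = (⟨2*k, by omega⟩ : Fin (2*n)) from Fin.ext h1,
      Equiv.swap_apply_left]
  · rw [if_neg h1]
    by_cases h2 : (x:ℕ) = 2*k+1
    · rw [if_pos h2, show x = (⟨2*k+1, by omega⟩ : Fin (2*n)) from Fin.ext h2,
        Equiv.swap_apply_right]
    · rw [if_neg h2, Equiv.swap_apply_of_ne_of_ne
        (fun hc => h1 (congrArg Fin.val hc)) (fun hc => h2 (congrArg Fin.val hc))]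

lemma posOf_gk (hk : k < n) (β : Bgrp (2*n)) (v : ℕ) (hv : v < 2*n) :
    posOf (bmul (gk n k hk) β) v
      = posOf β (if v = 2*k then 2*k+1 else if v = 2*k+1 then 2*k else v) := by
  have hv' : (if v = 2*k then 2*k+1 else if v = 2*k+1 then 2*k else v) < 2*n := by
    split_ifs <;> omega
  unfold posOf
  rw [dif_pos hv, dif_pos hv', gk_symm]
  congr 2
  exact Fin.ext (by simp [swap_val hk])

lemma sgnOf_gk (hk : k < n) (β : Bgrp (2*n)) (v : ℕ) (hv : v < 2*n) :
    sgnOf (bmul (gk n k hk) β) v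
      = sgnOf β (if v = 2*k then 2*k+1 else if v = 2*k+1 then 2*k else v) := by
  have hv' : (if v = 2*k then 2*k+1 else if v = 2*k+1 then 2*k else v) < 2*n := by
    split_ifs <;> omega
  unfold sgnOf
  rw [dif_pos hv, dif_pos hv', gk_snd, gk_symm]
  have harg : β.1.symm (Equiv.swap (⟨2*k, by omega⟩ : Fin (2*n)) ⟨2*k+1, by omega⟩ ⟨v, hv⟩)
      = β.1.symm ⟨(if v = 2*k then 2*k+1 else if v = 2*k+1 then 2*k else v), hv'⟩ := by
    congr 1
    exact Fin.ext (by simp [swap_val hk])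
  rw [harg]

lemma pairBad_gk (hk : k < n) (β : Bgrp (2*n)) (i : ℕ) :
    pairBad (bmul (gk n k hk) β) i ↔ pairBad β i := by
  by_cases hin : i < n
  · by_cases hik : i = k
    · subst hik
      unfold pairBad
      rw [posOf_gk hk β (2*i) (by omega), posOf_gk hk β (2*i+1) (by omega),
        sgnOf_gk hk β (2*i) (by omega), sgnOf_gk hk β (2*i+1) (by omega)]
      have ea : (if 2*i = 2*i then 2*i+1 else if 2*i = 2*i+1 then 2*i else 2*i) = 2*i+1 := by
        split_ifs <;> omega
      have eb : (if 2*i+1 = 2*i then 2*i+1 else if 2*i+1 = 2*i+1 then 2*i else 2*i+1)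
          = 2*i := by split_ifs <;> omega
      rw [ea, eb]
      constructor
      · rintro (h | ⟨h1, h2⟩)
        exacts [Or.inl (Ne.symm h), Or.inr ⟨h2, h1⟩]
      · rintro (h | ⟨h1, h2⟩)
        exacts [Or.inl (Ne.symm h), Or.inr ⟨h2, h1⟩]
    · unfold pairBad
      rw [posOf_gk hk β (2*i) (by omega), posOf_gk hk β (2*i+1) (by omega),
        sgnOf_gk hk β (2*i) (by omega), sgnOf_gk hk β (2*i+1) (by omega)]
      have ea : (if 2*i = 2*k then 2*k+1 else if 2*i = 2*k+1 then 2*k else 2*i) = 2*i := by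
        split_ifs <;> omega
      have eb : (if 2*i+1 = 2*k then 2*k+1 else if 2*i+1 = 2*k+1 then 2*k else 2*i+1)
          = 2*i+1 := by split_ifs <;> omega
      rw [ea, eb]
  · unfold pairBad posOf sgnOf
    simp only [dif_neg (show ¬ (2*i < 2*n) by omega),
      dif_neg (show ¬ (2*i+1 < 2*n) by omega)]

lemma gk_congr {k k' : ℕ} {hk : k < n} {hk' : k' < n} (e : k = k') :
    gk n k hk = gk n k' hk' := by subst e; rfl

lemma gk_gk (hk : k < n) (β : Bgrp (2*n)) :
    bmul (gk n k hk) (bmul (gk n k hk) β) = β := by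
  unfold bmul gk
  refine Prod.ext ?_ (funext fun i => ?_)
  · show Equiv.swap _ _ * (Equiv.swap _ _ * β.1) = β.1
    rw [← mul_assoc, Equiv.swap_mul_self, one_mul]
  · simp

lemma iota_eq (n : ℕ) (β : Bgrp (2*n)) (h : ∃ i, i < n ∧ pairBad β i) :
    iota n β = bmul (gk n (Nat.find h) (Nat.find_spec h).1) β := by
  simp only [iota]
  rw [dif_pos h]
  rfl

lemma iota_eq' (n : ℕ) (β : Bgrp (2*n)) (h : ¬ ∃ i, i < n ∧ pairBad β i) :
    iota n β = β := by
  simp only [iota]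
  rw [dif_neg h]

lemma wdw_neg_iff {m : ℕ} (β : Bgrp m) (p : Fin m) : wdw β p < 0 ↔ β.2 p = true := by
  unfold wdw
  cases hb : β.2 p <;> simp <;> omega

lemma N1_gk (hk : k < n) (β : Bgrp (2*n)) : N1 (bmul (gk n k hk) β) = N1 β := by
  unfold N1 NegB
  congr 1
  apply Finset.filter_congr
  intro p _
  rw [wdw_neg_iff, wdw_neg_iff, gk_snd]

lemma DesB_gk (hk : k < n) (β : Bgrp (2*n)) (hbad : pairBad β k) :
    DesB (bmul (gk n k hk) β) = DesB β := by
  unfold DesB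
  apply Finset.filter_congr
  intro j hj
  rw [Finset.mem_range] at hj
  have hj1 : j < 2*n := by omega
  have hj2 : j+1 < 2*n := by omega
  have hval1 : ((bmul (gk n k hk) β).1 ⟨j, hj1⟩ : ℕ)
      = (if ((β.1 ⟨j, hj1⟩ : ℕ)) = 2*k then 2*k+1
         else if ((β.1 ⟨j, hj1⟩ : ℕ)) = 2*k+1 then 2*k else (β.1 ⟨j, hj1⟩ : ℕ)) := by
    rw [gk_fst, swap_val hk]
  have hval2 : ((bmul (gk n k hk) β).1 ⟨j+1, hj2⟩ : ℕ)
      = (if ((β.1 ⟨j+1, hj2⟩ : ℕ)) = 2*k then 2*k+1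
         else if ((β.1 ⟨j+1, hj2⟩ : ℕ)) = 2*k+1 then 2*k else (β.1 ⟨j+1, hj2⟩ : ℕ)) := by
    rw [gk_fst, swap_val hk]
  have eP : wdwN β j
      = (if β.2 ⟨j, hj1⟩ then (-1:ℤ) else 1) * (((β.1 ⟨j, hj1⟩ : ℕ) : ℤ) + 1) := by
    unfold wdwN wdw; rw [dif_pos hj1]
  have eQ : wdwN β (j+1)
      = (if β.2 ⟨j+1, hj2⟩ then (-1:ℤ) else 1) * (((β.1 ⟨j+1, hj2⟩ : ℕ) : ℤ) + 1) := by
    unfold wdwN wdw; rw [dif_pos hj2]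
  have eP' : wdwN (bmul (gk n k hk) β) j
      = (if β.2 ⟨j, hj1⟩ then (-1:ℤ) else 1)
        * ((((if ((β.1 ⟨j, hj1⟩ : ℕ)) = 2*k then 2*k+1
           else if ((β.1 ⟨j, hj1⟩ : ℕ)) = 2*k+1 then 2*k else (β.1 ⟨j, hj1⟩ : ℕ)) : ℕ) : ℤ)
          + 1) := by
    unfold wdwN wdw; rw [dif_pos hj1, gk_snd, hval1]
  have eQ' : wdwN (bmul (gk n k hk) β) (j+1)
      = (if β.2 ⟨j+1, hj2⟩ then (-1:ℤ) else 1)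
        * ((((if ((β.1 ⟨j+1, hj2⟩ : ℕ)) = 2*k then 2*k+1
           else if ((β.1 ⟨j+1, hj2⟩ : ℕ)) = 2*k+1 then 2*k else (β.1 ⟨j+1, hj2⟩ : ℕ)) : ℕ) : ℤ)
          + 1) := by
    unfold wdwN wdw; rw [dif_pos hj2, gk_snd, hval2]
  rw [eP, eQ, eP', eQ']
  set vP := (β.1 ⟨j, hj1⟩ : ℕ) with hvPdef
  set vQ := (β.1 ⟨j+1, hj2⟩ : ℕ) with hvQdef
  have hvPQ : vP ≠ vQ := by
    intro hEq
    have h2 : (⟨j, hj1⟩ : Fin (2*n)) = ⟨j+1, hj2⟩ := β.1.injective (Fin.ext hEq)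
    have := congrArg Fin.val h2
    simp at this
  have sgn : ∀ p : Fin (2*n),
      ((if β.2 p then (-1:ℤ) else 1) = 1 ∧ β.2 p = false)
        ∨ ((if β.2 p then (-1:ℤ) else 1) = -1 ∧ β.2 p = true) := by
    intro p; cases h : β.2 p <;> simp [h]
  -- pair case helper: values 2k, 2k+1 at positions j, j+1 in some order force opposite signs
  have signs_ne : ∀ (hP : vP = 2*k) (hQ : vQ = 2*k+1), β.2 ⟨j, hj1⟩ ≠ β.2 ⟨j+1, hj2⟩ := by
    intro hP hQ
    have hfP : β.1.symm ⟨2*k, by omega⟩ = ⟨j, hj1⟩ := by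
      rw [Equiv.symm_apply_eq]; exact Fin.ext hP.symm
    have hfQ : β.1.symm ⟨2*k+1, by omega⟩ = ⟨j+1, hj2⟩ := by
      rw [Equiv.symm_apply_eq]; exact Fin.ext hQ.symm
    have hpos1 : posOf β (2*k) = j := by
      unfold posOf; rw [dif_pos (show 2*k < 2*n by omega), hfP]
    have hpos2 : posOf β (2*k+1) = j+1 := by
      unfold posOf; rw [dif_pos (show 2*k+1 < 2*n by omega), hfQ]
    have hsg1 : sgnOf β (2*k) = β.2 ⟨j, hj1⟩ := by
      unfold sgnOf; rw [dif_pos (show 2*k < 2*n by omega), hfP]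
    have hsg2 : sgnOf β (2*k+1) = β.2 ⟨j+1, hj2⟩ := by
      unfold sgnOf; rw [dif_pos (show 2*k+1 < 2*n by omega), hfQ]
    rcases hbad with hb | ⟨hb1, hb2⟩
    · rw [hsg1, hsg2] at hb; exact hb
    · rw [hpos1, hpos2] at hb1; exact absurd rfl hb1
  have signs_ne' : ∀ (hP : vP = 2*k+1) (hQ : vQ = 2*k), β.2 ⟨j, hj1⟩ ≠ β.2 ⟨j+1, hj2⟩ := by
    intro hP hQ
    have hfP : β.1.symm ⟨2*k+1, by omega⟩ = ⟨j, hj1⟩ := by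
      rw [Equiv.symm_apply_eq]; exact Fin.ext hP.symm
    have hfQ : β.1.symm ⟨2*k, by omega⟩ = ⟨j+1, hj2⟩ := by
      rw [Equiv.symm_apply_eq]; exact Fin.ext hQ.symm
    have hpos1 : posOf β (2*k+1) = j := by
      unfold posOf; rw [dif_pos (show 2*k+1 < 2*n by omega), hfP]
    have hpos2 : posOf β (2*k) = j+1 := by
      unfold posOf; rw [dif_pos (show 2*k < 2*n by omega), hfQ]
    have hsg1 : sgnOf β (2*k+1) = β.2 ⟨j, hj1⟩ := by
      unfold sgnOf; rw [dif_pos (show 2*k+1 < 2*n by omega), hfP]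
    have hsg2 : sgnOf β (2*k) = β.2 ⟨j+1, hj2⟩ := by
      unfold sgnOf; rw [dif_pos (show 2*k < 2*n by omega), hfQ]
    rcases hbad with hb | ⟨hb1, hb2⟩
    · rw [hsg1, hsg2] at hb; exact hb.symm
    · rw [hpos1, hpos2] at hb2; exact absurd rfl hb2
  rcases sgn ⟨j, hj1⟩ with ⟨hs1, hb1⟩ | ⟨hs1, hb1⟩ <;>
    rcases sgn ⟨j+1, hj2⟩ with ⟨hs2, hb2⟩ | ⟨hs2, hb2⟩ <;>
      rw [hs1, hs2] <;>
        [skip; skip; skip; skip] <;>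
        (by_cases cP1 : vP = 2*k
         · by_cases cQ1 : vQ = 2*k
           · exact absurd (cP1.trans cQ1.symm) hvPQ
           · by_cases cQ2 : vQ = 2*k+1
             · first
                 | exact absurd (hb1.trans hb2.symm) (signs_ne cP1 cQ2)
                 | (rw [if_pos cP1, if_neg cQ1, if_pos cQ2]; unfold precLt; omega)
             · rw [if_pos cP1, if_neg cQ1, if_neg cQ2]; unfold precLt; omega
         · by_cases cP2 : vP = 2*k+1
           · by_cases cQ1 : vQ = 2*k
             · first
                 | exact absurd (hb1.trans hb2.symm) (signs_ne' cP2 cQ1)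
                 | (rw [if_neg cP1, if_pos cP2, if_pos cQ1]; unfold precLt; omega)
             · by_cases cQ2 : vQ = 2*k+1
               · exact absurd (cP2.trans cQ2.symm) hvPQ
               · rw [if_neg cP1, if_pos cP2, if_neg cQ1, if_neg cQ2]; unfold precLt; omega
           · by_cases cQ1 : vQ = 2*k
             · rw [if_neg cP1, if_neg cP2, if_pos cQ1]; unfold precLt; omega
             · by_cases cQ2 : vQ = 2*k+1
               · rw [if_neg cP1, if_neg cP2, if_neg cQ1, if_pos cQ2]; unfold precLt; omega
               · rw [if_neg cP1, if_neg cP2, if_neg cQ1, if_neg cQ2])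

end IotaLemmas
/-- `ι` is an involution, and on non-fixed points it reverses the parity of the length
while preserving the descent set, the number of negative entries and `fmaj`. -/
theorem stmt12 (n : ℕ) (hn : 0 < n) :
    (∀ β : Bgrp (2*n), iota n (iota n β) = β) ∧
    (∀ β : Bgrp (2*n), iota n β ≠ β →
      lenB (iota n β) % 2 ≠ lenB β % 2 ∧ DesB (iota n β) = DesB β ∧
        N1 (iota n β) = N1 β ∧ fmaj (iota n β) = fmaj β) := by
  constructor
  · intro β
    by_cases h : ∃ i, i < n ∧ pairBad β i
    · have hk : Nat.find h < n := (Nat.find_spec h).1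
      have h1 : iota n β = bmul (gk n (Nat.find h) hk) β := iota_eq n β h
      have h' : ∃ i, i < n ∧ pairBad (bmul (gk n (Nat.find h) hk) β) i :=
        ⟨Nat.find h, hk, (pairBad_gk hk β (Nat.find h)).2 (Nat.find_spec h).2⟩
      have hfind : Nat.find h' = Nat.find h := by
        apply le_antisymm
        · exact Nat.find_le ⟨hk, (pairBad_gk hk β _).2 (Nat.find_spec h).2⟩
        · exact Nat.find_le ⟨(Nat.find_spec h').1, (pairBad_gk hk β _).1 (Nat.find_spec h').2⟩
      rw [h1, iota_eq n _ h', gk_congr hfind]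
      exact gk_gk hk β
    · rw [iota_eq' n β h, iota_eq' n β h]
  · intro β hne0
    have h : ∃ i, i < n ∧ pairBad β i := by
      by_contra hc
      exact hne0 (iota_eq' n β hc)
    have hk : Nat.find h < n := (Nat.find_spec h).1
    rw [iota_eq n β h]
    refine ⟨lenB_mod_ne (gk_mem hk), DesB_gk hk β (Nat.find_spec h).2, N1_gk hk β, ?_⟩
    unfold fmaj majB
    rw [DesB_gk hk β (Nat.find_spec h).2, N1_gk hk β]
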